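/- arXiv:2208.13580 — 5 statements merged into one kernel-verified Lean document; each statement's English description precedes it below -/
import Mathlib

section
/- If q_ℓ = q > 1 for all ℓ, then every solution of the terminal-boundary value problem h(ℓ+1,x) = -h(ℓ,x) + q·h(ℓ,x-1) for ℓ < k, h(ℓ, y_{n-ℓ}) = 0 for ℓ < k, and h(k,x) = q^{x - y_{n-k}}, has the property that q^{-x} h(ℓ, x) is a polynomial of degree k - ℓ in x, for each 0 ≤ ℓ ≤ k. -/
open Polynomial

lemma sub_one_eq : ((X:ℝ[X]) - 1) = X + C (-1) := by
  rw [map_neg, map_one, sub_eq_add_neg]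

lemma E_coeff (m : ℕ) : ((X:ℝ[X])^(m+1) - (X - 1)^(m+1)).coeff m = (m+1 : ℝ) := by
  rw [sub_one_eq, coeff_sub, coeff_X_pow, coeff_X_add_C_pow]
  simp [Nat.choose_succ_self_right]

lemma E_deg (m : ℕ) : ((X:ℝ[X])^(m+1) - (X - 1)^(m+1)).degree = (m : WithBot ℕ) := by
  have h1 : ((X:ℝ[X])^(m+1) - (X - 1)^(m+1)).degree ≤ (m : WithBot ℕ) := by
    rw [degree_le_iff_coeff_zero]
    intro j hj
    have hj' : m < j := by exact_mod_cast hj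
    rw [sub_one_eq, coeff_sub, coeff_X_pow, coeff_X_add_C_pow]
    rcases lt_trichotomy j (m+1) with hc|hc|hc
    · omega
    · subst hc; norm_num
    · rw [Nat.choose_eq_zero_of_lt hc, if_neg (by omega : ¬ j = m+1)]
      ring
  refine le_antisymm h1 (le_degree_of_ne_zero ?_)
  rw [E_coeff]; positivity

lemma step_lem (m : ℕ) (P : Polynomial ℝ) (hP : P.degree = (m : WithBot ℕ))
    (ih : ∀ P' : Polynomial ℝ, P'.degree < (m : WithBot ℕ) →
      ∃ Q' : Polynomial ℝ, Q'.comp (X - 1) - Q' = P' ∧ Q'.degree < ((m+1 : ℕ) : WithBot ℕ)) :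
    ∃ Q : Polynomial ℝ, Q.comp (X - 1) - Q = P ∧ Q.degree = ((m+1 : ℕ) : WithBot ℕ) := by
  have hP0 : P ≠ 0 := fun h0 => by simp [h0] at hP
  have ha : P.leadingCoeff ≠ 0 := leadingCoeff_ne_zero.2 hP0
  set c : ℝ := P.leadingCoeff / (m+1) with hc
  have hc0 : c ≠ 0 := div_ne_zero ha (by positivity)
  set E : Polynomial ℝ := (X:Polynomial ℝ)^(m+1) - (X - 1)^(m+1) with hE
  set G : Polynomial ℝ := C c * E with hG
  have hGdeg : G.degree = (m : WithBot ℕ) := by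
    rw [hG, degree_C_mul hc0, E_deg]
  have hElc : E.leadingCoeff = (m+1 : ℝ) := by
    rw [leadingCoeff, natDegree_eq_of_degree_eq_some (E_deg m), E_coeff]
  have hGlc : G.leadingCoeff = P.leadingCoeff := by
    rw [hG, leadingCoeff_mul, leadingCoeff_C, hElc, hc]
    field_simp
  have hsub : (P - G).degree < (m : WithBot ℕ) := by
    rw [← hP]
    exact degree_sub_lt (hP.trans hGdeg.symm) hP0 hGlc.symm
  obtain ⟨Q', hQ'e, hQ'd⟩ := ih (P - G) hsub
  set Q₀ : Polynomial ℝ := -(C c * X^(m+1)) with hQ₀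
  have hQ₀delta : Q₀.comp (X - 1) - Q₀ = G := by
    rw [hQ₀, hG, hE]
    simp only [neg_comp, mul_comp, C_comp, pow_comp, X_comp, sub_neg_eq_add]
    ring
  have hQ₀deg : Q₀.degree = ((m+1 : ℕ) : WithBot ℕ) := by
    rw [hQ₀, degree_neg, degree_C_mul_X_pow _ hc0]
  refine ⟨Q₀ + Q', ?_, ?_⟩
  · rw [add_comp]
    rw [show Q₀.comp (X-1) + Q'.comp (X-1) - (Q₀ + Q') =
      (Q₀.comp (X-1) - Q₀) + (Q'.comp (X-1) - Q') by ring, hQ₀delta, hQ'e]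
    ring
  · rw [degree_add_eq_left_of_degree_lt (by rw [hQ₀deg]; exact hQ'd)]
    exact hQ₀deg

lemma delta_lt : ∀ (m : ℕ) (P : Polynomial ℝ), P.degree < (m : WithBot ℕ) →
    ∃ Q : Polynomial ℝ, Q.comp (X - 1) - Q = P ∧ Q.degree < ((m+1 : ℕ) : WithBot ℕ) := by
  intro m
  induction m with
  | zero =>
    intro P hP
    have : P = 0 := by
      rw [← degree_eq_bot]
      exact Nat.WithBot.lt_zero_iff.1 (by exact_mod_cast hP)
    exact ⟨0, by simp [this], by simp [degree_zero]⟩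
  | succ m ih =>
    intro P hP
    have hle : P.degree ≤ (m : WithBot ℕ) := by
      cases hd : P.degree with
      | bot => exact bot_le
      | coe d =>
        rw [hd] at hP
        rw [Nat.cast_withBot] at hP
        have h1 : d < m + 1 := WithBot.coe_lt_coe.1 hP
        have h2 : d ≤ m := by omega
        exact WithBot.coe_le_coe.2 h2
    rcases lt_or_eq_of_le hle with hlt | heq
    · obtain ⟨Q, hQ1, hQ2⟩ := ih P hlt
      exact ⟨Q, hQ1, hQ2.trans (by exact_mod_cast WithBot.coe_lt_coe.2 (by omega))⟩
    · obtain ⟨Q, hQ1, hQ2⟩ := step_lem m P heq ih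
      exact ⟨Q, hQ1, by rw [hQ2]; exact_mod_cast WithBot.coe_lt_coe.2 (by omega)⟩

lemma delta_exact (m : ℕ) (P : Polynomial ℝ) (hP : P.degree = (m : WithBot ℕ)) :
    ∃ Q : Polynomial ℝ, Q.comp (X - 1) - Q = P ∧ Q.degree = ((m+1 : ℕ) : WithBot ℕ) :=
  step_lem m P hP (delta_lt m)

/-- in the homogeneous case `q_ℓ = q > 1`, every solution of the
terminal-boundary value problem has `q^{-x} h(ℓ,x)` polynomial of degree `k - ℓ` in `x`. -/
theorem stmt10 (n k : ℕ) (hk : k + 1 ≤ n) (q : ℝ) (hq : 1 < q)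
    (y : ℕ → ℤ) (hy : ∀ i j, 1 ≤ i → i < j → j ≤ n → y j < y i)
    (h : ℕ → ℤ → ℝ)
    (hrec : ∀ ℓ < k, ∀ x : ℤ, h (ℓ + 1) x = -h ℓ x + q * h ℓ (x - 1))
    (hbd : ∀ ℓ < k, h ℓ (y (n - ℓ)) = 0)
    (hterm : ∀ x : ℤ, h k x = q ^ (x - y (n - k))) :
    ∀ ℓ ≤ k, ∃ P : Polynomial ℝ,
      P.degree = ((k - ℓ : ℕ) : WithBot ℕ) ∧ ∀ x : ℤ, h ℓ x = q ^ x * P.eval (x : ℝ) := by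
  have hq0 : (0:ℝ) < q := by linarith
  have hqne : q ≠ 0 := ne_of_gt hq0
  have key : ∀ j : ℕ, ∀ ℓ : ℕ, ℓ + j = k → ∃ P : Polynomial ℝ,
      P.degree = (j : WithBot ℕ) ∧ ∀ x : ℤ, h ℓ x = q ^ x * P.eval (x : ℝ) := by
    intro j
    induction j with
    | zero =>
      intro ℓ hℓ
      have hℓk : ℓ = k := by omega
      subst hℓk
      refine ⟨C (q ^ (-(y (n - ℓ)))), by
        rw [degree_C]
        · rfl
        · positivity, ?_⟩
      intro x
      rw [hterm x, eval_C, ← zpow_add₀ hqne]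
      ring_nf
    | succ j ih =>
      intro ℓ hℓ
      have hℓk : ℓ < k := by omega
      obtain ⟨P, hPdeg, hPeq⟩ := ih (ℓ + 1) (by omega)
      obtain ⟨R, hRdelta, hRdeg⟩ := delta_exact j P hPdeg
      set c : ℝ := R.eval ((y (n - ℓ) : ℤ) : ℝ) with hc
      set S : Polynomial ℝ := R - C c with hS
      have hSdeg : S.degree = ((j+1 : ℕ) : WithBot ℕ) := by
        rw [hS]
        rw [sub_eq_add_neg, degree_add_eq_left_of_degree_lt, hRdeg]
        rw [hRdeg, degree_neg]
        exact (degree_C_le).trans_lt (by exact_mod_cast WithBot.coe_lt_coe.2 (by omega : 0 < j+1))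
      -- difference property of S, evaluated
      have hSdiff : ∀ t : ℝ, S.eval (t - 1) - S.eval t = P.eval t := by
        intro t
        have := congrArg (Polynomial.eval t) hRdelta
        simp only [eval_sub, eval_comp, eval_X, eval_one] at this
        simp only [hS, eval_sub, eval_C]
        linarith [this]
      have hSbd : S.eval ((y (n - ℓ) : ℤ) : ℝ) = 0 := by simp [hS, hc]
      refine ⟨S, hSdeg, ?_⟩
      -- f x := h ℓ x - q^x S(x); f y₀ = 0 and f x = q f (x-1)
      set f : ℤ → ℝ := fun x => h ℓ x - q ^ x * S.eval ((x:ℤ) : ℝ) with hf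
      have hfrec : ∀ x : ℤ, f x = q * f (x - 1) := by
        intro x
        have h1 := hrec ℓ hℓk x
        have h2 := hPeq x
        have h3 := hSdiff ((x : ℤ) : ℝ)
        have hz : ((x - 1 : ℤ) : ℝ) = (x:ℝ) - 1 := by push_cast; ring
        have hpow : q ^ (x : ℤ) = q * q ^ (x - 1 : ℤ) := by
          rw [← zpow_one_add₀ hqne]; ring_nf
        simp only [hf]
        rw [hz, hpow]
        have hkey : -h ℓ x + q * h ℓ (x - 1) = q * q ^ (x-1) * P.eval ((x:ℤ):ℝ) := by
          rw [← h1, h2, hpow]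
        rw [← h3] at hkey
        ring_nf
        ring_nf at hkey
        linarith [hkey]
      have hfy : f (y (n - ℓ)) = 0 := by
        simp [hf, hbd ℓ hℓk, hSbd]
      have hfzero : ∀ x : ℤ, f x = 0 := by
        intro x
        refine Int.inductionOn' x (y (n - ℓ)) hfy ?_ ?_
        · intro z _ ihz
          rw [hfrec (z+1), show z + 1 - 1 = z by ring, ihz, mul_zero]
        · intro z _ ihz
          have h0 : f z = q * f (z - 1) := hfrec z
          rw [ihz] at h0
          exact (mul_eq_zero.1 h0.symm).resolve_left hqne
      intro x
      have := hfzero x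
      simp only [hf] at this
      linarith [this]
  intro ℓ hℓ
  exact key (k - ℓ) ℓ (by omega)
end

section
/- For 1 ≤ j ≤ k and reals q_j,…,q_k > 1, the kernel Q̄_{[j,k]}(x,y) defined as (Q_j ∘ ⋯ ∘ Q_k)(x,y) for x > y and as (-1)^{k-j}(Q^†_j ∘ ⋯ ∘ Q^†_k)(x,y) for x ≤ y satisfies Q_j^{-1} ∘ Q̄_{[j,k]} = Q̄_{[j+1,k]} whenever j < k, and Q_k^{-1} ∘ Q̄_{[k,k]} = 0, where Q̄_{[k,k]}(x,y) = q_k^{y-x} for all x,y. -/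
open scoped BigOperators

/-- Composition of kernels on `ℤ`. -/
noncomputable def kComp (A B : ℤ → ℤ → ℝ) : ℤ → ℤ → ℝ :=
  fun x z => ∑' y : ℤ, A x y * B y z

/-- Iterated composition of a list of kernels (identity kernel for the empty list). -/
noncomputable def kCompList (L : List (ℤ → ℤ → ℝ)) : ℤ → ℤ → ℝ :=
  L.foldr kComp (fun x z => if x = z then 1 else 0)

/-- The strictly-left geometric kernel `Q_j(x,y) = q_j^{y-x} 1_{y<x}`. -/
noncomputable def Qker (q : ℕ → ℝ) (j : ℕ) : ℤ → ℤ → ℝ :=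
  fun x y => if y < x then q j ^ (y - x) else 0

/-- The weakly-right geometric kernel `Q^†_j(x,y) = q_j^{y-x} 1_{y≥x}`. -/
noncomputable def Qdag (q : ℕ → ℝ) (j : ℕ) : ℤ → ℤ → ℝ :=
  fun x y => if x ≤ y then q j ^ (y - x) else 0

/-- The inverse kernel `Q_j^{-1}(x,y) = -1_{y=x} + q_j 1_{y=x+1}`. -/
noncomputable def QinvK (q : ℕ → ℝ) (j : ℕ) : ℤ → ℤ → ℝ :=
  fun x y => (if y = x then (-1 : ℝ) else 0) + (if y = x + 1 then q j else 0)

/-- `Q_{[a,b]} = Q_a ∘ ⋯ ∘ Q_b`. -/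
noncomputable def QcompIcc (q : ℕ → ℝ) (a b : ℕ) : ℤ → ℤ → ℝ :=
  kCompList (((List.range (b + 1 - a)).map fun s => Qker q (a + s)))

/-- `Q^†_{[a,b]} = Q^†_a ∘ ⋯ ∘ Q^†_b`. -/
noncomputable def QdagCompIcc (q : ℕ → ℝ) (a b : ℕ) : ℤ → ℤ → ℝ :=
  kCompList (((List.range (b + 1 - a)).map fun s => Qdag q (a + s)))

/-- The piecewise kernel `Q̄_{[j,k]}`: equal to `Q_j∘⋯∘Q_k` for `x > y` and to
`(-1)^{k-j} Q^†_j∘⋯∘Q^†_k` for `x ≤ y`. -/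
noncomputable def Qbar (q : ℕ → ℝ) (j k : ℕ) : ℤ → ℤ → ℝ :=
  fun x y => if y < x then QcompIcc q j k x y
    else (-1 : ℝ) ^ (k - j) * QdagCompIcc q j k x y


/-!
`Q_j^{-1}` is a left inverse of `Q_j` and minus a left inverse of `Q^†_j`: the geometric rows
telescope: `q_j Q_j(x+1, ·) - Q_j(x, ·) = δ_x` and
`q_j Q^†_j(x+1, ·) - Q^†_j(x, ·) = -δ_x`.
Since `Q_j^{-1}` only looks at the rows `x` and `x+1`, and both rows of `Q̄_{[j,k]}` lie on the
same branch as the row `x` (a composite of at least two `Q`'s vanishes at `(x+1, x)`), peeling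
off the first factor of `Q_{[j,k]}` resp. `Q^†_{[j,k]}` gives the claim, the sign `-1` being
absorbed by `(-1)^{k-j}`. All sums involved have finite support.
-/

def kId : ℤ → ℤ → ℝ := fun x z => if x = z then 1 else 0

lemma kComp_kId_left (B : ℤ → ℤ → ℝ) : kComp kId B = B := by
  funext x z
  simp only [kComp, kId, ite_mul, one_mul, zero_mul]
  exact tsum_ite_eq' x (B · z)

lemma kComp_kId_right (A : ℤ → ℤ → ℝ) : kComp A kId = A := by
  funext x z
  simp only [kComp, kId, mul_ite, mul_one, mul_zero]
  exact tsum_ite_eq z (A x ·)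

lemma kComp_neg_left (A B : ℤ → ℤ → ℝ) : kComp (-A) B = -kComp A B := by
  funext x z
  simp only [kComp, Pi.neg_apply, neg_mul, tsum_neg]

lemma kComp_eq_zero_of_forall_mul_eq_zero {A B : ℤ → ℤ → ℝ} {x z : ℤ}
    (h : ∀ w, A x w * B w z = 0) : kComp A B x z = 0 :=
  (tsum_congr h).trans tsum_zero

section Inverse

variable (q : ℕ → ℝ) (j : ℕ)

lemma kComp_QinvK_apply (A : ℤ → ℤ → ℝ) (x z : ℤ) :
    kComp (QinvK q j) A x z = q j * A (x + 1) z - A x z := by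
  rw [kComp, tsum_eq_sum (s := {x, x + 1})]
  · rw [Finset.sum_pair (by omega)]
    simp only [QinvK, if_neg (show x ≠ x + 1 by omega), if_neg (show x + 1 ≠ x by omega),
      ↓reduceIte]
    ring
  · intro w hw
    simp only [Finset.mem_insert, Finset.mem_singleton, not_or] at hw
    simp [QinvK, hw.1, hw.2]

/-- Associativity of `Q_j^{-1} ∘ A ∘ B` at `(x, z)`: only the rows `x`, `x + 1` of `A` enter. -/
lemma kComp_QinvK_kComp {A B : ℤ → ℤ → ℝ} {x z : ℤ}
    (h₀ : Summable fun w => A x w * B w z) (h₁ : Summable fun w => A (x + 1) w * B w z) :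
    kComp (QinvK q j) (kComp A B) x z = kComp (kComp (QinvK q j) A) B x z := by
  calc kComp (QinvK q j) (kComp A B) x z
      = q j * ∑' w, A (x + 1) w * B w z - ∑' w, A x w * B w z := kComp_QinvK_apply q j _ x z
    _ = ∑' w, (q j * A (x + 1) w - A x w) * B w z := by
        rw [← tsum_mul_left, ← (h₁.mul_left (q j)).tsum_sub h₀]
        simp only [sub_mul, mul_assoc]
    _ = ∑' w, kComp (QinvK q j) A x w * B w z := by simp only [kComp_QinvK_apply]

variable {q j}

lemma kComp_QinvK_Qker (hq : q j ≠ 0) : kComp (QinvK q j) (Qker q j) = kId := by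
  funext x w
  rw [kComp_QinvK_apply]
  simp only [Qker, kId]
  rcases lt_trichotomy w x with h | rfl | h
  · rw [if_pos (by omega), if_pos h, if_neg h.ne', show w - (x + 1) = w - x - 1 by ring,
      zpow_sub_one₀ hq]
    field_simp
    ring
  · simp [hq]
  · rw [if_neg (by omega), if_neg (by omega), if_neg h.ne]
    ring

lemma kComp_QinvK_Qdag (hq : q j ≠ 0) : kComp (QinvK q j) (Qdag q j) = -kId := by
  funext x w
  rw [kComp_QinvK_apply]
  simp only [Qdag, kId, Pi.neg_apply]
  rcases lt_trichotomy w x with h | rfl | h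
  · rw [if_neg (by omega), if_neg (by omega), if_neg h.ne']
    ring
  · simp
  · rw [if_pos (by omega), if_pos h.le, if_neg h.ne, show w - (x + 1) = w - x - 1 by ring,
      zpow_sub_one₀ hq]
    field_simp
    ring

end Inverse

section Composites

variable (q : ℕ → ℝ)

lemma kCompList_range_succ (f : ℕ → ℤ → ℤ → ℝ) (a n : ℕ) :
    kCompList ((List.range (n + 1)).map fun s => f (a + s))
      = kComp (f a) (kCompList ((List.range n).map fun s => f (a + 1 + s))) := by
  simp only [List.range_succ_eq_map, List.map_cons, List.map_map, Function.comp_def,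
    add_zero, Nat.succ_eq_add_one, add_assoc, add_comm 1]
  rfl

lemma QcompIcc_self (a : ℕ) : QcompIcc q a a = Qker q a := by
  rw [QcompIcc, Nat.add_sub_cancel_left, kCompList_range_succ]
  exact kComp_kId_right _

lemma QdagCompIcc_self (a : ℕ) : QdagCompIcc q a a = Qdag q a := by
  rw [QdagCompIcc, Nat.add_sub_cancel_left, kCompList_range_succ]
  exact kComp_kId_right _

lemma QcompIcc_of_lt {a b : ℕ} (hab : a < b) :
    QcompIcc q a b = kComp (Qker q a) (QcompIcc q (a + 1) b) := by
  rw [QcompIcc, QcompIcc, show b + 1 - a = b + 1 - (a + 1) + 1 by omega, kCompList_range_succ]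

lemma QdagCompIcc_of_lt {a b : ℕ} (hab : a < b) :
    QdagCompIcc q a b = kComp (Qdag q a) (QdagCompIcc q (a + 1) b) := by
  rw [QdagCompIcc, QdagCompIcc, show b + 1 - a = b + 1 - (a + 1) + 1 by omega,
    kCompList_range_succ]

lemma kCompList_Qker_eq_zero (n a : ℕ) {x z : ℤ} (h : x < z + n) :
    kCompList ((List.range n).map fun s => Qker q (a + s)) x z = 0 := by
  induction n generalizing a x with
  | zero => exact if_neg (by push_cast at h; omega)
  | succ n ih =>
    rw [kCompList_range_succ]
    refine kComp_eq_zero_of_forall_mul_eq_zero fun w => ?_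
    by_cases hw : w < x
    · rw [ih (a + 1) (by push_cast at h; omega), mul_zero]
    · simp [Qker, hw]

lemma kCompList_Qdag_eq_zero (n a : ℕ) {x z : ℤ} (h : z < x) :
    kCompList ((List.range n).map fun s => Qdag q (a + s)) x z = 0 := by
  induction n generalizing a x with
  | zero => exact if_neg (by omega)
  | succ n ih =>
    rw [kCompList_range_succ]
    refine kComp_eq_zero_of_forall_mul_eq_zero fun w => ?_
    by_cases hw : x ≤ w
    · rw [ih (a + 1) (by omega), mul_zero]
    · simp [Qdag, hw]

lemma QcompIcc_eq_zero {a b : ℕ} {x z : ℤ} (h : x < z + (b + 1 - a : ℕ)) :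
    QcompIcc q a b x z = 0 :=
  kCompList_Qker_eq_zero q _ a h

lemma QdagCompIcc_eq_zero (a b : ℕ) {x z : ℤ} (h : z < x) : QdagCompIcc q a b x z = 0 :=
  kCompList_Qdag_eq_zero q _ a h

lemma summable_Qker_mul_QcompIcc (a b : ℕ) (x z : ℤ) :
    Summable fun w => Qker q a x w * QcompIcc q (a + 1) b w z :=
  summable_of_ne_finset_zero (s := Finset.Icc z x) fun w hw => by
    rw [Finset.mem_Icc, not_and_or, not_le, not_le] at hw
    rcases hw with hw | hw
    · rw [QcompIcc_eq_zero q (by omega), mul_zero]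
    · simp only [Qker, if_neg (show ¬ w < x by omega), zero_mul]

lemma summable_Qdag_mul_QdagCompIcc (a b : ℕ) (x z : ℤ) :
    Summable fun w => Qdag q a x w * QdagCompIcc q (a + 1) b w z :=
  summable_of_ne_finset_zero (s := Finset.Icc x z) fun w hw => by
    rw [Finset.mem_Icc, not_and_or, not_le, not_le] at hw
    rcases hw with hw | hw
    · simp only [Qdag, if_neg (show ¬ x ≤ w by omega), zero_mul]
    · rw [QdagCompIcc_eq_zero q _ _ hw, mul_zero]

end Composites

section Qbar

variable (q : ℕ → ℝ) {j k : ℕ}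

lemma Qbar_of_lt {x y : ℤ} (h : y < x) : Qbar q j k x y = QcompIcc q j k x y := if_pos h

lemma Qbar_of_le {x y : ℤ} (h : x ≤ y) :
    Qbar q j k x y = (-1) ^ (k - j) * QdagCompIcc q j k x y :=
  if_neg (not_lt.mpr h)

/-- Also for `x = y + 1`, where both composites vanish as soon as `j < k`. -/
lemma Qbar_of_le_add_one (hjk : j < k) {x y : ℤ} (h : x ≤ y + 1) :
    Qbar q j k x y = (-1) ^ (k - j) * QdagCompIcc q j k x y := by
  by_cases hxy : y < x
  · rw [Qbar_of_lt q hxy, QcompIcc_eq_zero q (by omega), QdagCompIcc_eq_zero q _ _ hxy,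
      mul_zero]
  · exact Qbar_of_le q (not_lt.mp hxy)

lemma Qbar_self (x y : ℤ) : Qbar q k k x y = q k ^ (y - x) := by
  by_cases hxy : y < x
  · simp [Qbar, QcompIcc_self, Qker, hxy]
  · simp [Qbar, QdagCompIcc_self, Qdag, hxy, not_lt.mp hxy]

variable {q}

lemma kComp_QinvK_Qbar_of_lt (hq : q j ≠ 0) (hjk : j < k) (x z : ℤ) :
    kComp (QinvK q j) (Qbar q j k) x z = Qbar q (j + 1) k x z := by
  rcases lt_or_ge z x with hzx | hxz
  · calc kComp (QinvK q j) (Qbar q j k) x z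
        = kComp (QinvK q j) (QcompIcc q j k) x z := by
          rw [kComp_QinvK_apply, kComp_QinvK_apply, Qbar_of_lt q hzx, Qbar_of_lt q (by omega)]
      _ = kComp (kComp (QinvK q j) (Qker q j)) (QcompIcc q (j + 1) k) x z := by
          rw [QcompIcc_of_lt q hjk, kComp_QinvK_kComp q j (summable_Qker_mul_QcompIcc q _ _ _ _)
            (summable_Qker_mul_QcompIcc q _ _ _ _)]
      _ = Qbar q (j + 1) k x z := by
          rw [kComp_QinvK_Qker hq, kComp_kId_left, Qbar_of_lt q hzx]
  · have hsign : (-1 : ℝ) ^ (k - j) = -(-1) ^ (k - (j + 1)) := by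
      rw [show k - j = k - (j + 1) + 1 by omega, pow_succ]
      ring
    calc kComp (QinvK q j) (Qbar q j k) x z
        = (-1) ^ (k - j) * kComp (QinvK q j) (QdagCompIcc q j k) x z := by
          rw [kComp_QinvK_apply, kComp_QinvK_apply, Qbar_of_le_add_one q hjk (by omega),
            Qbar_of_le_add_one q hjk (by omega)]
          ring
      _ = (-1) ^ (k - j) * kComp (kComp (QinvK q j) (Qdag q j)) (QdagCompIcc q (j + 1) k) x z := by
          rw [QdagCompIcc_of_lt q hjk, kComp_QinvK_kComp q j
            (summable_Qdag_mul_QdagCompIcc q _ _ _ _) (summable_Qdag_mul_QdagCompIcc q _ _ _ _)]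
      _ = Qbar q (j + 1) k x z := by
          rw [kComp_QinvK_Qdag hq, kComp_neg_left, kComp_kId_left, Pi.neg_apply, Pi.neg_apply,
            Qbar_of_le q hxz, hsign]
          ring

lemma kComp_QinvK_Qbar_self (hq : q k ≠ 0) (x z : ℤ) :
    kComp (QinvK q k) (Qbar q k k) x z = 0 := by
  rw [kComp_QinvK_apply, Qbar_self, Qbar_self, show z - (x + 1) = z - x - 1 by ring,
    zpow_sub_one₀ hq]
  field_simp
  ring

end Qbar

theorem stmt13_general (q : ℕ → ℝ) (hq : ∀ i, 1 < q i) (j k : ℕ) :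
    (j < k → ∀ x z : ℤ, kComp (QinvK q j) (Qbar q j k) x z = Qbar q (j + 1) k x z) ∧
    (∀ x y : ℤ, Qbar q k k x y = q k ^ (y - x)) ∧
    (∀ x z : ℤ, kComp (QinvK q k) (Qbar q k k) x z = 0) := by
  have hq₀ : ∀ i, q i ≠ 0 := fun i => (zero_lt_one.trans (hq i)).ne'
  exact ⟨kComp_QinvK_Qbar_of_lt (hq₀ j), Qbar_self q, kComp_QinvK_Qbar_self (hq₀ k)⟩

/-- for `1 ≤ j ≤ k` and `q_j,…,q_k > 1`,
`Q_j^{-1} ∘ Q̄_{[j,k]} = Q̄_{[j+1,k]}` when `j < k`, while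
`Q̄_{[k,k]}(x,y) = q_k^{y-x}` and `Q_k^{-1} ∘ Q̄_{[k,k]} = 0`. -/
theorem stmt13 (q : ℕ → ℝ) (hq : ∀ i, 1 < q i) (j k : ℕ) (hjk : j ≤ k) :
    (j < k → ∀ x z : ℤ, kComp (QinvK q j) (Qbar q j k) x z = Qbar q (j + 1) k x z) ∧
    (∀ x y : ℤ, Qbar q k k x y = q k ^ (y - x)) ∧
    (∀ x z : ℤ, kComp (QinvK q k) (Qbar q k k) x z = 0) :=
  stmt13_general q hq j k
end

section
/- Triangularity of the Gram matrix: assume q_1 < q_2 < ⋯ < q_N, and let M_{i,j} = -∮_{γ_{q_i}} (dξ/2πi) ξ^{y_j - j} · [∏_{ℓ=j+1}^{N}(q_ℓ - ξ) ∏_{ℓ=r+1}^{t}(1 + p_ℓ ξ)] / ∏_{ℓ=i}^{N}(q_ℓ - ξ), where γ_{q_i} is a small circle around q_i enclosing no other pole. Then M_{i,j} = 0 for i > j, and M_{i,i} = q_i^{y_i - i} ∏_{ℓ=r+1}^{t}(1 + p_ℓ q_i) ≠ 0; in particular M is upper-triangular and invertible. -/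
open Real Metric Complex Finset

/-!
Writing `Q_i(ξ) = ∏_{ℓ=i}^{N} (q_ℓ - ξ) = (q_i - ξ) ∏_{ℓ>i} (q_ℓ - ξ)`, the integrand is
`g(ξ) / ((q_i - ξ) ∏_{ℓ>i} (q_ℓ - ξ))` with `g` holomorphic near the disc, and the other nodes lie
outside the disc. The Cauchy integral formula therefore gives
`M_{i,j} = g(q_i) / ∏_{ℓ>i} (q_ℓ - q_i)` for all `i, j`. For `j < i` the numerator `g` contains
the factor `q_i - ξ`, so `M_{i,j} = 0`; for `i = j` the two products over `ℓ > i` cancel.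
-/

theorem DifferentiableOn.two_pi_I_inv_mul_circleIntegral_div_const_sub {c : ℂ} {R : ℝ}
    (hR : 0 < R) {f : ℂ → ℂ} (hf : DifferentiableOn ℂ f (closedBall c R)) :
    (2 * π * I)⁻¹ * ∮ z in C(c, R), f z / (c - z) = -f c := by
  have hint : (fun z => f z / (c - z)) = fun z => (z - c)⁻¹ • (-f) z := by
    funext z
    rw [smul_eq_mul, Pi.neg_apply, ← neg_sub, div_neg, div_eq_inv_mul, mul_neg]
  rw [hint, hf.neg.circleIntegral_sub_inv_smul (mem_ball_self hR), smul_eq_mul, ← mul_assoc,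
    inv_mul_cancel₀ two_pi_I_ne_zero, one_mul, Pi.neg_apply]

theorem two_pi_I_inv_mul_circleIntegral_div_prod_Icc {N i : ℕ} (hiN : i ≤ N) {q : ℕ → ℂ}
    {ε : ℝ} (hε : 0 < ε) (hsep : ∀ ℓ ∈ Ioc i N, ε < ‖q ℓ - q i‖) {g : ℂ → ℂ}
    (hg : DifferentiableOn ℂ g (closedBall (q i) ε)) :
    (2 * π * I)⁻¹ * ∮ ξ in C(q i, ε), g ξ / ∏ ℓ ∈ Icc i N, (q ℓ - ξ) =
      -(g (q i) / ∏ ℓ ∈ Ioc i N, (q ℓ - q i)) := by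
  have hprod : ∀ ξ, ∏ ℓ ∈ Icc i N, (q ℓ - ξ) = (q i - ξ) * ∏ ℓ ∈ Ioc i N, (q ℓ - ξ) := fun ξ => by
    rw [Icc_eq_cons_Ioc hiN, prod_cons]
  have hnode : ∀ ξ ∈ closedBall (q i) ε, ∀ ℓ ∈ Ioc i N, q ℓ - ξ ≠ 0 := by
    intro ξ hξ ℓ hℓ hzero
    rw [← sub_eq_zero.mp hzero, mem_closedBall, dist_eq_norm] at hξ
    exact (hsep ℓ hℓ).not_ge hξ
  have hdiff : DifferentiableOn ℂ (fun ξ => g ξ / ∏ ℓ ∈ Ioc i N, (q ℓ - ξ))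
      (closedBall (q i) ε) :=
    hg.div (DifferentiableOn.fun_finsetProd fun ℓ _ => (differentiableOn_const _).sub
      differentiableOn_id) fun ξ hξ => prod_ne_zero_iff.mpr (hnode ξ hξ)
  simp_rw [hprod, mul_comm (q i - _), ← div_div]
  exact hdiff.two_pi_I_inv_mul_circleIntegral_div_const_sub hε

theorem stmt15_general (N r t : ℕ) (q p : ℕ → ℝ)
    (hq : ∀ ℓ, 0 < q ℓ)
    (hp : ∀ ℓ, 0 < p ℓ)
    (y : ℕ → ℤ) (i j : ℕ) (hiN : i ≤ N)
    (ε : ℝ) (hε : 0 < ε) (hε0 : ε < q i)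
    (hεq : ∀ ℓ, 1 ≤ ℓ → ℓ ≤ N → ℓ ≠ i → ε < |q ℓ - q i|)
    (Mij : ℂ)
    (hMij : Mij = -((2 * Real.pi * Complex.I)⁻¹ *
      ∮ ξ in C((q i : ℂ), ε),
        (ξ ^ (y j - (j : ℤ)) *
            (∏ ℓ ∈ Finset.Icc (j + 1) N, ((q ℓ : ℂ) - ξ)) *
            (∏ ℓ ∈ Finset.Icc (r + 1) t, (1 + (p ℓ : ℂ) * ξ))) /
          (∏ ℓ ∈ Finset.Icc i N, ((q ℓ : ℂ) - ξ)))) :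
    (j < i → Mij = 0) ∧
    (i = j →
      Mij = (q i : ℂ) ^ (y i - (i : ℤ)) *
          ∏ ℓ ∈ Finset.Icc (r + 1) t, (1 + (p ℓ : ℂ) * (q i : ℂ)) ∧
      Mij ≠ 0) := by
  set P : ℂ → ℂ := fun ξ => ∏ ℓ ∈ Icc (r + 1) t, (1 + (p ℓ : ℂ) * ξ)
  have hsep : ∀ ℓ ∈ Ioc i N, ε < ‖(q ℓ : ℂ) - q i‖ := fun ℓ hℓ => by
    rw [mem_Ioc] at hℓ
    rw [← ofReal_sub, norm_real, Real.norm_eq_abs]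
    exact hεq ℓ (by omega) hℓ.2 (by omega)
  have hzero : ∀ ξ ∈ closedBall (q i : ℂ) ε, ξ ≠ 0 := by
    rintro ξ hξ rfl
    rw [mem_closedBall, dist_comm, dist_zero_right, norm_real, Real.norm_of_nonneg (hq i).le] at hξ
    exact hε0.not_ge hξ
  have hg : DifferentiableOn ℂ (fun ξ => ξ ^ (y j - (j : ℤ)) *
      (∏ ℓ ∈ Icc (j + 1) N, ((q ℓ : ℂ) - ξ)) * P ξ) (closedBall (q i : ℂ) ε) := by
    refine DifferentiableOn.mul (DifferentiableOn.mul (fun ξ hξ => ?_) ?_) ?_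
    · exact (differentiableAt_zpow.mpr (Or.inl (hzero ξ hξ))).differentiableWithinAt
    all_goals fun_prop
  have hM : Mij = (q i : ℂ) ^ (y j - (j : ℤ)) * (∏ ℓ ∈ Icc (j + 1) N, ((q ℓ : ℂ) - q i)) *
      P (q i) / ∏ ℓ ∈ Ioc i N, ((q ℓ : ℂ) - q i) := by
    rw [hMij, two_pi_I_inv_mul_circleIntegral_div_prod_Icc hiN hε hsep hg, neg_neg]
  refine ⟨fun hji => ?_, fun hij => ?_⟩
  · rw [hM, prod_eq_zero (i := i) (by rw [mem_Icc]; omega) (sub_self _)]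
    simp
  · subst hij
    have hD : ∏ ℓ ∈ Ioc i N, ((q ℓ : ℂ) - q i) ≠ 0 :=
      prod_ne_zero_iff.mpr fun ℓ hℓ => norm_pos_iff.mp (hε.trans (hsep ℓ hℓ))
    have hP : P (q i) ≠ 0 := prod_ne_zero_iff.mpr fun ℓ _ => by
      exact_mod_cast (add_pos one_pos (mul_pos (hp ℓ) (hq i))).ne'
    rw [hM, Icc_add_one_left_eq_Ioc, mul_right_comm, mul_div_assoc, div_self hD, mul_one]
    exact ⟨rfl, mul_ne_zero (zpow_ne_zero _ (ofReal_ne_zero.mpr (hq i).ne')) hP⟩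

/-- triangularity of the Gram matrix.  Assume `q_1 < ⋯ < q_N` and let
`M_{i,j} = -(2πi)⁻¹ ∮_{γ_{q_i}} ξ^{y_j - j} ∏_{ℓ=j+1}^{N}(q_ℓ-ξ) ∏_{ℓ=r+1}^{t}(1+p_ℓ ξ)
             / ∏_{ℓ=i}^{N}(q_ℓ-ξ) dξ`,
where `γ_{q_i}` is a circle of radius `ε` around `q_i` enclosing no other pole.
Then `M_{i,j} = 0` for `i > j`, and
`M_{i,i} = q_i^{y_i - i} ∏_{ℓ=r+1}^{t}(1 + p_ℓ q_i) ≠ 0`. -/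
theorem stmt15 (N r t : ℕ) (q p : ℕ → ℝ)
    (hq : ∀ ℓ, 0 < q ℓ)
    (hqmono : ∀ a b, 1 ≤ a → a < b → b ≤ N → q a < q b)
    (hp : ∀ ℓ, 0 < p ℓ)
    (y : ℕ → ℤ) (i j : ℕ) (hi1 : 1 ≤ i) (hiN : i ≤ N) (hj1 : 1 ≤ j) (hjN : j ≤ N)
    (ε : ℝ) (hε : 0 < ε) (hε0 : ε < q i)
    (hεq : ∀ ℓ, 1 ≤ ℓ → ℓ ≤ N → ℓ ≠ i → ε < |q ℓ - q i|)
    (Mij : ℂ)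
    (hMij : Mij = -((2 * Real.pi * Complex.I)⁻¹ *
      ∮ ξ in C((q i : ℂ), ε),
        (ξ ^ (y j - (j : ℤ)) *
            (∏ ℓ ∈ Finset.Icc (j + 1) N, ((q ℓ : ℂ) - ξ)) *
            (∏ ℓ ∈ Finset.Icc (r + 1) t, (1 + (p ℓ : ℂ) * ξ))) /
          (∏ ℓ ∈ Finset.Icc i N, ((q ℓ : ℂ) - ξ)))) :
    (j < i → Mij = 0) ∧
    (i = j →
      Mij = (q i : ℂ) ^ (y i - (i : ℤ)) *
          ∏ ℓ ∈ Finset.Icc (r + 1) t, (1 + (p ℓ : ℂ) * (q i : ℂ)) ∧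
      Mij ≠ 0) :=
  stmt15_general N r t q p hq hp y i j hiN ε hε hε0 hεq Mij hMij
end

section
/- Limit characterization of the virtual-variable kernel: assume q_j < q_{j+1} < ⋯ < q_k. Then lim_{x→∞} q_j^{x} · (Q_j ∘ Q_{j+1} ∘ ⋯ ∘ Q_k)(x, y) = q_j^{y + k - j} / ∏_{ℓ=j+1}^{k} (q_ℓ - q_j) for every y ∈ ℤ. -/
open scoped BigOperators

/-! Since `Q_j(x, z) = q_j^(z - x)` for `z < x`, we have
`q_j^x Q_{[j,k]}(x, y) = ∑_{z < x} q_j^z Q_{[j+1,k]}(z, y)`, so by dominated convergence the limit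
is the full sum `∑_z q_j^z Q_{[j+1,k]}(z, y)`. That sum is evaluated by peeling off one kernel at a
time: for `0 < r < q_ℓ` the geometric series gives `∑_z r^z Q_ℓ(z, w) = r^(w+1) / (q_ℓ - r)`, and
all kernels are nonnegative, so the two summations may be exchanged. -/

open Filter Topology

lemma hasSum_tsum_of_hasSum_fiberwise_of_nonneg {β γ : Type*} {F : β → γ → ℝ}
    (hF : ∀ b c, 0 ≤ F b c) {g : γ → ℝ} (hfib : ∀ c, HasSum (fun b => F b c) (g c)) {s : ℝ}
    (hg : HasSum g s) : HasSum (fun b => ∑' c, F b c) s := by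
  set f : γ × β → ℝ := fun p => F p.2 p.1
  have hf : Summable f := (summable_prod_of_nonneg fun p => hF _ _).2
    ⟨fun c => (hfib c).summable, hg.summable.congr fun c => (hfib c).tsum_eq.symm⟩
  have hfs : HasSum f s := hf.hasSum_iff.2 <| by
    rw [hf.tsum_prod' fun c => (hfib c).summable, tsum_congr fun c => (hfib c).tsum_eq,
      hg.tsum_eq]
  have hswap : HasSum (f ∘ Prod.swap) s := (Equiv.prodComm β γ).hasSum_iff.2 hfs
  exact hswap.prod_fiberwise fun b => (hswap.summable.prod_factor b).hasSum

lemma tendsto_tsum_indicator_Iio_atTop {β G : Type*} [Preorder β] [NoTopOrder β]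
    [NormedAddCommGroup G] [CompleteSpace G] {f : β → G} (hf : Summable fun z => ‖f z‖) :
    Tendsto (fun x => ∑' z, (Set.Iio x).indicator f z) atTop (𝓝 (∑' z, f z)) := by
  refine tendsto_tsum_of_dominated_convergence hf (fun z => ?_) (.of_forall fun x z => ?_)
  · refine tendsto_const_nhds.congr' ?_
    filter_upwards [eventually_gt_atTop z] with x hx
    exact (Set.indicator_of_mem (Set.mem_Iio.2 hx) f).symm
  · exact norm_indicator_le_norm_self f z

section GeometricKernels

variable (q : ℕ → ℝ) {r : ℝ}

lemma Qker_nonneg {a : ℕ} (ha : 0 < q a) (x y : ℤ) : 0 ≤ Qker q a x y := by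
  unfold Qker
  positivity

lemma kCompList_map_Qker_nonneg {l : List ℕ} (hl : ∀ a ∈ l, 0 < q a) (x y : ℤ) :
    0 ≤ kCompList (l.map (Qker q)) x y := by
  induction l generalizing x with
  | nil => simp only [List.map_nil, kCompList, List.foldr_nil]; positivity
  | cons a l ih =>
    exact tsum_nonneg fun w =>
      mul_nonneg (Qker_nonneg q (hl a (.head l)) x w) (ih (fun b hb => hl b (.tail a hb)) w)

lemma hasSum_zpow_mul_Qker {a : ℕ} (hr : 0 < r) (hra : r < q a) (w : ℤ) :
    HasSum (fun z => r ^ z * Qker q a z w) (r ^ (w + 1) / (q a - r)) := by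
  have hqa : 0 < q a := hr.trans hra
  have hinj : Function.Injective fun n : ℕ => w + 1 + n := fun m n h => by simpa using h
  rw [← hinj.hasSum_iff]
  · have hgeom := (hasSum_geometric_of_lt_one (div_nonneg hr.le hqa.le)
      ((div_lt_one hqa).2 hra)).mul_left (r ^ (w + 1) / q a)
    have hterm : ((fun z => r ^ z * Qker q a z w) ∘ fun n : ℕ => w + 1 + n) =
        fun n => r ^ (w + 1) / q a * (r / q a) ^ n := by
      funext n
      have hexp : w - (w + 1 + n) = -((n : ℤ) + 1) := by ring
      simp only [Function.comp_apply, Qker, if_pos (by omega : w < w + 1 + n), hexp,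
        zpow_add₀ hr.ne', zpow_neg, zpow_add_one₀ hqa.ne', zpow_natCast, div_pow]
      field_simp
    rw [hterm, show r ^ (w + 1) / (q a - r) = r ^ (w + 1) / q a * (1 - r / q a)⁻¹ by field_simp]
    exact hgeom
  · rintro z hz
    have : ¬ w < z := fun h => hz ⟨(z - w - 1).toNat, by simp only; omega⟩
    simp [Qker, this]

lemma hasSum_zpow_mul_kCompList_map_Qker (hr : 0 < r) {l : List ℕ} (hl : ∀ a ∈ l, r < q a)
    (y : ℤ) : HasSum (fun z => r ^ z * kCompList (l.map (Qker q)) z y)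
      (r ^ (y + l.length) / (l.map (q · - r)).prod) := by
  induction l with
  | nil =>
    have hterm : (fun z => r ^ z * kCompList [] z y) = fun z => if z = y then r ^ y else 0 := by
      funext z
      by_cases h : z = y <;> simp [kCompList, h]
    simpa [hterm] using hasSum_ite_eq y (r ^ y)
  | cons a l ih =>
    set K := kCompList (l.map (Qker q))
    have hra : r < q a := hl a (.head l)
    have hK : ∀ w, 0 ≤ K w y := fun w =>
      kCompList_map_Qker_nonneg q (fun b hb => hr.trans (hl b (.tail a hb))) w y
    have hsum := hasSum_tsum_of_hasSum_fiberwise_of_nonneg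
      (F := fun z w => r ^ z * Qker q a z w * K w y)
      (fun z w => mul_nonneg (mul_nonneg (by positivity) (Qker_nonneg q (hr.trans hra) z w)) (hK w))
      (fun w => (hasSum_zpow_mul_Qker q hr hra w).mul_right (K w y))
      (((ih fun b hb => hl b (.tail a hb)).mul_left (r / (q a - r))).congr_fun fun w => by
        rw [zpow_add_one₀ hr.ne']; ring)
    have hval : r ^ (y + (a :: l).length) / ((a :: l).map (q · - r)).prod =
        r / (q a - r) * (r ^ (y + l.length) / (l.map (q · - r)).prod) := by
      rw [List.length_cons, List.map_cons, List.prod_cons, Nat.cast_succ, ← add_assoc,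
        zpow_add_one₀ hr.ne', div_mul_div_comm, mul_comm r]
    rw [hval]
    refine hsum.congr_fun fun z => ?_
    simp only [List.map_cons, kCompList, List.foldr_cons, kComp, ← tsum_mul_left, mul_assoc]
    rfl

lemma QcompIcc_eq_kComp {a b : ℕ} (hab : a ≤ b) :
    QcompIcc q a b =
      kComp (Qker q a) (kCompList ((List.range' (a + 1) (b - a)).map (Qker q))) := by
  rw [QcompIcc, show b + 1 - a = b - a + 1 by omega, List.range_succ_eq_map,
    List.range'_eq_map_range]
  simp [kCompList, List.map_map, Function.comp_def, add_assoc, add_comm 1]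

lemma zpow_mul_kComp_Qker {a : ℕ} (ha : q a ≠ 0) (K : ℤ → ℤ → ℝ) (x y : ℤ) :
    q a ^ x * kComp (Qker q a) K x y =
      ∑' z, (Set.Iio x).indicator (fun z => q a ^ z * K z y) z := by
  rw [kComp, ← tsum_mul_left]
  refine tsum_congr fun z => ?_
  by_cases hz : z < x
  · simp only [Qker, if_pos hz, Set.indicator_of_mem (Set.mem_Iio.2 hz), ← mul_assoc,
      ← zpow_add₀ ha, add_sub_cancel]
  · simp [Qker, hz]

end GeometricKernels

lemma Nat.prod_Icc_add_one_eq_prod_range' {M : Type*} [CommMonoid M] (f : ℕ → M) (a b : ℕ) :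
    ∏ ℓ ∈ Finset.Icc (a + 1) b, f ℓ = ((List.range' (a + 1) (b - a)).map f).prod := by
  rw [Finset.Icc_add_one_left_eq_Ioc, Nat.Ioc_eq_range']
  rfl

/-- limit characterization of the virtual-variable kernel.  If
`1 < q_j < q_{j+1} < ⋯ < q_k`, then
`lim_{x→∞} q_j^x (Q_j∘⋯∘Q_k)(x,y) = q_j^{y+k-j} / ∏_{ℓ=j+1}^{k} (q_ℓ - q_j)`. -/
theorem stmt18 (j k : ℕ) (hjk : j ≤ k) (q : ℕ → ℝ) (hq : 1 < q j)
    (hmono : ∀ a b : ℕ, j ≤ a → a < b → b ≤ k → q a < q b) (y : ℤ) :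
    Filter.Tendsto (fun x : ℤ => q j ^ x * QcompIcc q j k x y) Filter.atTop
      (nhds (q j ^ (y + (k : ℤ) - (j : ℤ)) /
        ∏ ℓ ∈ Finset.Icc (j + 1) k, (q ℓ - q j))) := by
  have hqj : 0 < q j := one_pos.trans hq
  have hl : ∀ a ∈ List.range' (j + 1) (k - j), q j < q a := fun a ha => by
    rw [List.mem_range'_1] at ha
    exact hmono j a le_rfl (by omega) (by omega)
  have hsum := hasSum_zpow_mul_kCompList_map_Qker q hqj hl y
  rw [List.length_range', Nat.cast_sub hjk, ← add_sub_assoc,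
    ← Nat.prod_Icc_add_one_eq_prod_range'] at hsum
  rw [← hsum.tsum_eq, QcompIcc_eq_kComp q hjk]
  simp only [zpow_mul_kComp_Qker q hqj.ne']
  exact tendsto_tsum_indicator_Iio_atTop (by simpa using hsum.summable.abs)
end

section
/- Alternating sum cancellation (Case 2.3 of the induction): for integers z_2 ≥ z_1 > c (with c = y_{n-ℓ}), and reals q_{m+1},…,q_{n-ℓ} > 0, ∑_{y=c+1}^{z_1 - 1} q_{n-ℓ}^{z_2-y} Q_{[m+1,n-ℓ-1]}(z_1,y) + (-1)^{n-ℓ-m-2} ∑_{y=z_1}^{z_2} q_{n-ℓ}^{z_2-y} Q^†_{[m+1,n-ℓ-1]}(z_1,y) = Q_{[m+1,n-ℓ]}(z_1,c) q_{n-ℓ}^{z_2-c} - (-1)^{n-ℓ-m-1} Q^†_{[m+1,n-ℓ]}(z_1,z_2), where Q_{[a,b]} and Q^†_{[a,b]} denote the compositions Q_a∘⋯∘Q_b and Q^†_a∘⋯∘Q^†_b of the strictly-left and weakly-right geometric kernels. -/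
open scoped BigOperators

/-!
Split off the last factor: `Q_{[m+1,k]} = Q_{[m+1,k-1]} ∘ Q_k` and likewise for `Q^†`. Composition
is associative here because all kernels of one kind are supported in `{y ≤ x}` (resp. `{x ≤ y}`),
so every composite sum is finite. As `Q_{[m+1,k-1]}(z₁, ·)` lives on `y < z₁` and `Q_k(·, c)` on
`y > c`, evaluating the last factor turns the right-hand side into the two sums on the left; the
signs match since `(-1)^{k-m-1} = -(-1)^{k-m-2}`.
-/

open Finset

def KernelSupportedIn (r : ℤ → ℤ → Prop) (K : ℤ → ℤ → ℝ) : Prop :=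
  ∀ x y, K x y ≠ 0 → r x y

section Kernels

variable {r : ℤ → ℤ → Prop} {A B C : ℤ → ℤ → ℝ}

theorem KernelSupportedIn.mono {r' : ℤ → ℤ → Prop} (hA : KernelSupportedIn r A)
    (h : ∀ x y, r x y → r' x y) : KernelSupportedIn r' A :=
  fun x y hxy => h x y (hA x y hxy)

theorem kComp_apply_eq_sum {x z : ℤ} (s : Finset ℤ) (hs : ∀ u, A x u ≠ 0 → B u z ≠ 0 → u ∈ s) :
    kComp A B x z = ∑ u ∈ s, A x u * B u z :=
  tsum_eq_sum fun u hu => by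
    by_contra h
    exact hu (hs u (left_ne_zero_of_mul h) (right_ne_zero_of_mul h))

theorem KernelSupportedIn.kComp {r₁ r₂ : ℤ → ℤ → Prop} (hA : KernelSupportedIn r₁ A)
    (hB : KernelSupportedIn r₂ B) (h : ∀ x u z, r₁ x u → r₂ u z → r x z) :
    KernelSupportedIn r (kComp A B) := by
  intro x z hxz
  obtain ⟨u, hu⟩ : ∃ u, A x u * B u z ≠ 0 := by
    by_contra! h0
    exact hxz ((tsum_congr h0).trans tsum_zero)
  exact h x u z (hA x u (left_ne_zero_of_mul hu)) (hB u z (right_ne_zero_of_mul hu))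

theorem kComp_id_left (C : ℤ → ℤ → ℝ) : kComp (fun x z => if x = z then 1 else 0) C = C := by
  funext x z
  simp [kComp]

theorem kComp_id_right (C : ℤ → ℤ → ℝ) : kComp C (fun x z => if x = z then 1 else 0) = C := by
  funext x z
  simp [kComp]

theorem tsum_tsum_eq_sum_sum {F : ℤ → ℤ → ℝ} (s : Finset ℤ)
    (hF : ∀ a b, F a b ≠ 0 → a ∈ s ∧ b ∈ s) :
    ∑' a, ∑' b, F a b = ∑ a ∈ s, ∑ b ∈ s, F a b := by
  have hinner : ∀ a, ∑' b, F a b = ∑ b ∈ s, F a b := fun a =>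
    tsum_eq_sum fun b hb => by_contra fun h => hb (hF a b h).2
  simp only [hinner]
  exact tsum_eq_sum fun a ha => sum_eq_zero fun b _ => by_contra fun h => ha (hF a b h).1

theorem kComp_assoc [IsTrans ℤ r] (hfin : ∀ x z, {u | r x u ∧ r u z}.Finite)
    (hA : KernelSupportedIn r A) (hB : KernelSupportedIn r B) (hC : KernelSupportedIn r C) :
    kComp (kComp A B) C = kComp A (kComp B C) := by
  funext x z
  set s := (hfin x z).toFinset
  have hs : ∀ u, r x u → r u z → u ∈ s := fun u hxu huz => (hfin x z).mem_toFinset.2 ⟨hxu, huz⟩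
  have hsupp : ∀ u y, A x u * B u y * C y z ≠ 0 → u ∈ s ∧ y ∈ s := by
    intro u y h
    simp only [ne_eq, mul_eq_zero, not_or] at h
    have hxu := hA x u h.1.1
    have huy := hB u y h.1.2
    have hyz := hC y z h.2
    exact ⟨hs u hxu (_root_.trans huy hyz), hs y (_root_.trans hxu huy) hyz⟩
  calc kComp (kComp A B) C x z = ∑' y, ∑' u, A x u * B u y * C y z := by
        simp only [kComp, tsum_mul_right]
    _ = ∑ u ∈ s, ∑ y ∈ s, A x u * B u y * C y z := by
        rw [tsum_tsum_eq_sum_sum s fun y u h => (hsupp u y h).symm, sum_comm]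
    _ = ∑' u, ∑' y, A x u * (B u y * C y z) := by
        simp only [← mul_assoc]
        exact (tsum_tsum_eq_sum_sum s hsupp).symm
    _ = kComp A (kComp B C) x z := by
        simp only [kComp, tsum_mul_left]

theorem KernelSupportedIn.kCompList [Std.Refl r] [IsTrans ℤ r] {L : List (ℤ → ℤ → ℝ)}
    (hL : ∀ K ∈ L, KernelSupportedIn r K) : KernelSupportedIn r (kCompList L) := by
  induction L with
  | nil =>
    intro x z hxz
    change (if x = z then (1 : ℝ) else 0) ≠ 0 at hxz
    obtain rfl : x = z := by by_contra h; exact hxz (if_neg h)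
    exact Std.Refl.refl x
  | cons K L ih =>
    exact (hL K List.mem_cons_self).kComp (ih fun K' hK' => hL K' (List.mem_cons_of_mem K hK'))
      fun _ _ _ => _root_.trans

theorem kCompList_append_singleton [Std.Refl r] [IsTrans ℤ r]
    (hfin : ∀ x z, {u | r x u ∧ r u z}.Finite) {L : List (ℤ → ℤ → ℝ)}
    (hL : ∀ K ∈ L, KernelSupportedIn r K) (hC : KernelSupportedIn r C) :
    kCompList (L ++ [C]) = kComp (kCompList L) C := by
  induction L with
  | nil => exact (kComp_id_right C).trans (kComp_id_left C).symm
  | cons K L ih =>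
    have hL' : ∀ K' ∈ L, KernelSupportedIn r K' := fun K' hK' => hL K' (List.mem_cons_of_mem K hK')
    change kComp K (kCompList (L ++ [C])) = kComp (kComp K (kCompList L)) C
    rw [ih hL', kComp_assoc hfin (hL K List.mem_cons_self) (KernelSupportedIn.kCompList hL') hC]

theorem kCompList_map_range_succ [Std.Refl r] [IsTrans ℤ r]
    (hfin : ∀ x z, {u | r x u ∧ r u z}.Finite) {K : ℕ → ℤ → ℤ → ℝ}
    (hK : ∀ j, KernelSupportedIn r (K j)) (n : ℕ) :
    kCompList ((List.range (n + 1)).map K) = kComp (kCompList ((List.range n).map K)) (K n) := by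
  rw [List.range_succ, List.map_append, List.map_singleton]
  exact kCompList_append_singleton hfin (List.forall_mem_map.2 fun j _ => hK j) (hK n)

end Kernels

section Geometric

variable (q : ℕ → ℝ)

theorem Qker_supportedIn (j : ℕ) : KernelSupportedIn (· > ·) (Qker q j) := by
  intro x y h
  by_contra hxy
  exact h (if_neg hxy)

theorem Qdag_supportedIn (j : ℕ) : KernelSupportedIn (· ≤ ·) (Qdag q j) := by
  intro x y h
  by_contra hxy
  exact h (if_neg hxy)

variable {q} {a b : ℕ}

theorem QcompIcc_supportedIn (hab : a ≤ b) : KernelSupportedIn (· > ·) (QcompIcc q a b) := by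
  rw [QcompIcc, show b + 1 - a = b - a + 1 by omega, List.range_succ_eq_map, List.map_cons,
    List.map_map]
  exact (Qker_supportedIn q _).kComp (r₂ := (· ≥ ·))
    (KernelSupportedIn.kCompList (List.forall_mem_map.2 fun _ _ =>
      (Qker_supportedIn q _).mono fun _ _ => le_of_lt))
    fun _ _ _ h₁ h₂ => lt_of_le_of_lt h₂ h₁

theorem QdagCompIcc_supportedIn : KernelSupportedIn (· ≤ ·) (QdagCompIcc q a b) :=
  KernelSupportedIn.kCompList (List.forall_mem_map.2 fun _ _ => Qdag_supportedIn q _)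

theorem QcompIcc_succ (hab : a ≤ b + 1) :
    QcompIcc q a (b + 1) = kComp (QcompIcc q a b) (Qker q (b + 1)) := by
  rw [QcompIcc, QcompIcc, show b + 1 + 1 - a = b + 1 - a + 1 by omega,
    kCompList_map_range_succ
      (fun x z => (Set.finite_Icc z x).subset fun _ h => ⟨h.2, h.1⟩)
      (fun j => (Qker_supportedIn q (a + j)).mono fun _ _ => le_of_lt),
    Nat.add_sub_cancel' hab]

theorem QdagCompIcc_succ (hab : a ≤ b + 1) :
    QdagCompIcc q a (b + 1) = kComp (QdagCompIcc q a b) (Qdag q (b + 1)) := by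
  rw [QdagCompIcc, QdagCompIcc, show b + 1 + 1 - a = b + 1 - a + 1 by omega,
    kCompList_map_range_succ Set.finite_Icc (fun j => Qdag_supportedIn q (a + j)),
    Nat.add_sub_cancel' hab]

theorem QcompIcc_succ_apply (hab : a ≤ b) (x z : ℤ) :
    QcompIcc q a (b + 1) x z
      = ∑ w ∈ Icc (z + 1) (x - 1), QcompIcc q a b x w * q (b + 1) ^ (z - w) := by
  rw [QcompIcc_succ (by omega), kComp_apply_eq_sum (Icc (z + 1) (x - 1))]
  · refine sum_congr rfl fun w hw => ?_
    rw [Qker, if_pos (by have := (mem_Icc.1 hw).1; omega)]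
  · intro u h₁ h₂
    have := QcompIcc_supportedIn hab x u h₁
    have := Qker_supportedIn q _ u z h₂
    exact mem_Icc.2 ⟨by omega, by omega⟩

theorem QdagCompIcc_succ_apply (hab : a ≤ b + 1) (x z : ℤ) :
    QdagCompIcc q a (b + 1) x z
      = ∑ w ∈ Icc x z, q (b + 1) ^ (z - w) * QdagCompIcc q a b x w := by
  rw [QdagCompIcc_succ hab, kComp_apply_eq_sum (Icc x z)]
  · refine sum_congr rfl fun w hw => ?_
    rw [Qdag, if_pos (mem_Icc.1 hw).2, mul_comm]
  · exact fun u h₁ h₂ => mem_Icc.2 ⟨QdagCompIcc_supportedIn x u h₁, Qdag_supportedIn q _ u z h₂⟩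

end Geometric

theorem stmt19_general (n ℓ m : ℕ) (hrange : m + 2 ≤ n - ℓ) (q : ℕ → ℝ) (hq : ∀ i, 0 < q i)
    (c z1 z2 : ℤ) :
    (∑ w ∈ Finset.Icc (c + 1) (z1 - 1),
        q (n - ℓ) ^ (z2 - w) * QcompIcc q (m + 1) (n - ℓ - 1) z1 w)
    + (-1 : ℝ) ^ (n - ℓ - m - 2) *
        (∑ w ∈ Finset.Icc z1 z2,
          q (n - ℓ) ^ (z2 - w) * QdagCompIcc q (m + 1) (n - ℓ - 1) z1 w)
    = QcompIcc q (m + 1) (n - ℓ) z1 c * q (n - ℓ) ^ (z2 - c)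
      - (-1 : ℝ) ^ (n - ℓ - m - 1) * QdagCompIcc q (m + 1) (n - ℓ) z1 z2 := by
  obtain ⟨b, hb⟩ : ∃ b, n - ℓ = b + 1 := ⟨n - ℓ - 1, by omega⟩
  rw [hb, Nat.add_sub_cancel, QcompIcc_succ_apply (by omega), QdagCompIcc_succ_apply (by omega),
    sum_mul]
  have hsign : (-1 : ℝ) ^ (b + 1 - m - 1) = -(-1) ^ (b + 1 - m - 2) := by
    rw [show b + 1 - m - 1 = b + 1 - m - 2 + 1 by omega, pow_succ, mul_neg_one]
  have hpow : ∀ w ∈ Icc (c + 1) (z1 - 1),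
      QcompIcc q (m + 1) b z1 w * q (b + 1) ^ (c - w) * q (b + 1) ^ (z2 - c)
        = q (b + 1) ^ (z2 - w) * QcompIcc q (m + 1) b z1 w := fun w _ => by
    rw [mul_assoc, ← zpow_add₀ (hq _).ne', sub_add_sub_cancel', mul_comm]
  rw [sum_congr rfl hpow, hsign]
  ring

/-- alternating sum cancellation (Case 2.3 of the induction).  For
`z₂ ≥ z₁ > c` and positive `q_{m+1},…,q_{n-ℓ}`:
`∑_{y=c+1}^{z₁-1} q_{n-ℓ}^{z₂-y} Q_{[m+1,n-ℓ-1]}(z₁,y)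
  + (-1)^{n-ℓ-m-2} ∑_{y=z₁}^{z₂} q_{n-ℓ}^{z₂-y} Q^†_{[m+1,n-ℓ-1]}(z₁,y)
  = Q_{[m+1,n-ℓ]}(z₁,c) q_{n-ℓ}^{z₂-c} - (-1)^{n-ℓ-m-1} Q^†_{[m+1,n-ℓ]}(z₁,z₂)`. -/
theorem stmt19 (n ℓ m : ℕ) (hrange : m + 2 ≤ n - ℓ) (q : ℕ → ℝ) (hq : ∀ i, 0 < q i)
    (c z1 z2 : ℤ) (h1 : c < z1) (h2 : z1 ≤ z2) :
    (∑ w ∈ Finset.Icc (c + 1) (z1 - 1),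
        q (n - ℓ) ^ (z2 - w) * QcompIcc q (m + 1) (n - ℓ - 1) z1 w)
    + (-1 : ℝ) ^ (n - ℓ - m - 2) *
        (∑ w ∈ Finset.Icc z1 z2,
          q (n - ℓ) ^ (z2 - w) * QdagCompIcc q (m + 1) (n - ℓ - 1) z1 w)
    = QcompIcc q (m + 1) (n - ℓ) z1 c * q (n - ℓ) ^ (z2 - c)
      - (-1 : ℝ) ^ (n - ℓ - m - 1) * QdagCompIcc q (m + 1) (n - ℓ) z1 z2 :=
  stmt19_general n ℓ m hrange q hq c z1 z2
end
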